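/- A subspace U ⊆ V is an ideal of the Lie triple system if and only if U is a 𝔤-submodule of V. Consequently, V is irreducible as a 𝔤-module if and only if the Lie triple system V has no ideals other than 0 and V. (This is the equivalence (1)⟺(2) of Theorem 3.1.) -/

import Mathlib

/-!
Let `W = U^⊥`; positive-definiteness gives `V = U ⊕ W` and `W^⊥ = U`. Because
`B (D u w) X = ⟨X u, w⟩`, the subspace `U` is `𝔤`-stable exactly when `D u w = 0` for all
`u ∈ U`, `w ∈ W`. If `U` is an ideal, `B (D a b) (D u w) = ⟨[a, b, u], w⟩ = 0` shows that
`ρ (D u w)` vanishes, so `D u w = 0` by faithfulness. Conversely, if `U` is stable then `D`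
(which is skew) vanishes on `U × W` and `W × U`, and cyclicity kills `[u, x, w]` for `x ∈ U`,
so `[u, x, y]` only depends on the `U`-components of `x` and `y`.
-/

open LinearMap (BilinForm)
open LinearMap.BilinForm

namespace LinearMap.BilinForm

variable {K V : Type*} [Field K] [AddCommGroup V] [Module K V] [FiniteDimensional K V]
  {ip : BilinForm K V}

lemma orthogonal_orthogonal_of_anisotropic (hsymm : ∀ v w : V, ip v w = ip w v)
    (hanis : ∀ v : V, ip v v = 0 → v = 0) (U : Submodule K V) :
    ip.orthogonal (ip.orthogonal U) = U :=
  orthogonal_orthogonal ⟨fun v hv => hanis v (hv v), fun v hv => hanis v (hv v)⟩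
    (fun v w h => by rwa [hsymm]) U

lemma isCompl_orthogonal_of_anisotropic (hsymm : ∀ v w : V, ip v w = ip w v)
    (hanis : ∀ v : V, ip v v = 0 → v = 0) (U : Submodule K V) :
    IsCompl U (ip.orthogonal U) :=
  (isCompl_orthogonal_iff_disjoint fun v w h => by rwa [hsymm]).2 <|
    Submodule.disjoint_def.2 fun v hvU hvW => hanis v (hvW v hvU)

end LinearMap.BilinForm

section Faulkner

variable {K g V : Type*} [Field K] [AddCommGroup g] [Module K g] [AddCommGroup V] [Module K V]
  {B : g →ₗ[K] g →ₗ[K] K} {ρ : g →ₗ[K] Module.End K V} {ip : BilinForm K V}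
  {D : V →ₗ[K] V →ₗ[K] g}

def IsLieTripleIdeal (ρ : g →ₗ[K] Module.End K V) (D : V →ₗ[K] V →ₗ[K] g)
    (U : Submodule K V) : Prop :=
  (∀ u ∈ U, ∀ x y : V, ρ (D u x) y ∈ U) ∧ (∀ x y : V, ∀ u ∈ U, ρ (D x y) u ∈ U)

lemma faulkner_skew (hBnondeg : ∀ X : g, (∀ Y : g, B X Y = 0) → X = 0)
    (hipsymm : ∀ v w : V, ip v w = ip w v)
    (hipinv : ∀ (X : g) (v w : V), ip (ρ X v) w + ip v (ρ X w) = 0)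
    (hD : ∀ (v w : V) (X : g), B (D v w) X = ip (ρ X v) w) (v w : V) :
    D w v = -D v w := by
  refine eq_neg_of_add_eq_zero_left (hBnondeg _ fun X => ?_)
  rw [map_add, LinearMap.add_apply, hD, hD, hipsymm (ρ X w), add_comm]
  exact hipinv X v w

lemma faulkner_eq_zero_of_invariant (hBnondeg : ∀ X : g, (∀ Y : g, B X Y = 0) → X = 0)
    (hD : ∀ (v w : V) (X : g), B (D v w) X = ip (ρ X v) w) {U : Submodule K V}
    (hU : ∀ X : g, ∀ u ∈ U, ρ X u ∈ U) {u w : V} (hu : u ∈ U) (hw : w ∈ ip.orthogonal U) :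
    D u w = 0 :=
  hBnondeg _ fun X => (hD u w X).trans (hw _ (hU X u hu))

lemma faulkner_eq_zero_of_isLieTripleIdeal (hfaithful : Function.Injective ρ)
    (hBsymm : ∀ X Y : g, B X Y = B Y X) (hipnd : ∀ v : V, (∀ w : V, ip v w = 0) → v = 0)
    (hD : ∀ (v w : V) (X : g), B (D v w) X = ip (ρ X v) w) {U : Submodule K V}
    (hU : IsLieTripleIdeal ρ D U) {u w : V} (hu : u ∈ U) (hw : w ∈ ip.orthogonal U) :
    D u w = 0 := by
  refine hfaithful ((map_zero ρ).symm ▸ LinearMap.ext fun a => hipnd _ fun b => ?_)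
  calc ip (ρ (D u w) a) b = B (D u w) (D a b) := by rw [← hD, hBsymm]
    _ = ip (ρ (D a b) u) w := hD u w (D a b)
    _ = 0 := hw _ (hU.2 a b u hu)

variable [FiniteDimensional K V]

lemma invariant_of_faulkner_eq_zero (hipsymm : ∀ v w : V, ip v w = ip w v)
    (hanis : ∀ v : V, ip v v = 0 → v = 0)
    (hD : ∀ (v w : V) (X : g), B (D v w) X = ip (ρ X v) w) {U : Submodule K V}
    (hDU : ∀ u ∈ U, ∀ w ∈ ip.orthogonal U, D u w = 0) :
    ∀ X : g, ∀ u ∈ U, ρ X u ∈ U := by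
  intro X u hu
  rw [← orthogonal_orthogonal_of_anisotropic hipsymm hanis U]
  intro w hw
  rw [hipsymm, ← hD, hDU u hu w hw, map_zero, LinearMap.zero_apply]

lemma isLieTripleIdeal_of_invariant (hBnondeg : ∀ X : g, (∀ Y : g, B X Y = 0) → X = 0)
    (hipsymm : ∀ v w : V, ip v w = ip w v) (hanis : ∀ v : V, ip v v = 0 → v = 0)
    (hipinv : ∀ (X : g) (v w : V), ip (ρ X v) w + ip v (ρ X w) = 0)
    (hD : ∀ (v w : V) (X : g), B (D v w) X = ip (ρ X v) w)
    (hcyc : ∀ x y z : V, ρ (D x y) z + ρ (D y z) x + ρ (D z x) y = 0) {U : Submodule K V}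
    (hU : ∀ X : g, ∀ u ∈ U, ρ X u ∈ U) : IsLieTripleIdeal ρ D U := by
  have hcodisj := (isCompl_orthogonal_of_anisotropic hipsymm hanis U).codisjoint
  have hDUW {u w : V} (hu : u ∈ U) (hw : w ∈ ip.orthogonal U) : D u w = 0 :=
    faulkner_eq_zero_of_invariant hBnondeg hD hU hu hw
  refine ⟨fun u hu x y => ?_, fun x y u hu => hU _ u hu⟩
  obtain ⟨x₁, x₂, hx₁, hx₂, rfl⟩ := Submodule.codisjoint_iff_exists_add_eq.mp hcodisj x
  obtain ⟨y₁, y₂, hy₁, hy₂, rfl⟩ := Submodule.codisjoint_iff_exists_add_eq.mp hcodisj y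
  have hcross : ρ (D u x₁) y₂ = 0 := by
    have := hcyc x₁ y₂ u
    rwa [hDUW hx₁ hy₂, faulkner_skew hBnondeg hipsymm hipinv hD, hDUW hu hy₂, neg_zero,
      map_zero, LinearMap.zero_apply, LinearMap.zero_apply, zero_add, zero_add] at this
  rw [(D u).map_add, hDUW hu hx₂, add_zero, map_add, hcross, add_zero]
  exact hU _ y₁ hy₁

lemma isLieTripleIdeal_iff_invariant (hfaithful : Function.Injective ρ)
    (hBsymm : ∀ X Y : g, B X Y = B Y X) (hBnondeg : ∀ X : g, (∀ Y : g, B X Y = 0) → X = 0)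
    (hipsymm : ∀ v w : V, ip v w = ip w v) (hanis : ∀ v : V, ip v v = 0 → v = 0)
    (hipinv : ∀ (X : g) (v w : V), ip (ρ X v) w + ip v (ρ X w) = 0)
    (hD : ∀ (v w : V) (X : g), B (D v w) X = ip (ρ X v) w)
    (hcyc : ∀ x y z : V, ρ (D x y) z + ρ (D y z) x + ρ (D z x) y = 0) (U : Submodule K V) :
    IsLieTripleIdeal ρ D U ↔ ∀ X : g, ∀ u ∈ U, ρ X u ∈ U :=
  ⟨fun hU => invariant_of_faulkner_eq_zero hipsymm hanis hD fun _ hu _ hw =>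
      faulkner_eq_zero_of_isLieTripleIdeal hfaithful hBsymm (fun v hv => hanis v (hv v)) hD hU
        hu hw,
    isLieTripleIdeal_of_invariant hBnondeg hipsymm hanis hipinv hD hcyc⟩

end Faulkner

attribute [local instance 100] LieRing.ofAssociativeRing

theorem lts_ideal_iff_submodule_general
    {g V : Type*} [LieRing g] [LieAlgebra ℝ g]
    [AddCommGroup V] [Module ℝ V]
    [FiniteDimensional ℝ V]
    -- the ad-invariant nondegenerate symmetric bilinear form on 𝔤
    (B : g →ₗ[ℝ] g →ₗ[ℝ] ℝ)
    (hBsymm : ∀ X Y : g, B X Y = B Y X)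
    (hBnondeg : ∀ X : g, (∀ Y : g, B X Y = 0) → X = 0)
    -- the faithful representation of 𝔤 on V
    (ρ : g →ₗ⁅ℝ⁆ Module.End ℝ V)
    (hfaithful : Function.Injective ρ)
    -- the 𝔤-invariant positive-definite symmetric bilinear form on V
    (ip : V →ₗ[ℝ] V →ₗ[ℝ] ℝ)
    (hipsymm : ∀ v w : V, ip v w = ip w v)
    (hippos : ∀ v : V, v ≠ 0 → 0 < ip v v)
    (hipinv : ∀ (X : g) (v w : V), ip (ρ X v) w + ip v (ρ X w) = 0)
    -- the Faulkner map D, defined by transposing the 𝔤-action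
    (D : V →ₗ[ℝ] V →ₗ[ℝ] g)
    (hD : ∀ (v w : V) (X : g), B (D v w) X = ip (ρ X v) w)
    -- cyclicity: [x,y,z] + [y,z,x] + [z,x,y] = 0 (Lie triple system condition)
    (hcyc : ∀ x y z : V, ρ (D x y) z + ρ (D y z) x + ρ (D z x) y = 0) :
    (∀ U : Submodule ℝ V,
        ((∀ u ∈ U, ∀ x y : V, ρ (D u x) y ∈ U) ∧ (∀ x y : V, ∀ u ∈ U, ρ (D x y) u ∈ U))
          ↔ (∀ (X : g), ∀ u ∈ U, ρ X u ∈ U)) ∧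
      ((∀ U : Submodule ℝ V, (∀ (X : g), ∀ u ∈ U, ρ X u ∈ U) → U = ⊥ ∨ U = ⊤)
        ↔ (∀ U : Submodule ℝ V,
            ((∀ u ∈ U, ∀ x y : V, ρ (D u x) y ∈ U) ∧ (∀ x y : V, ∀ u ∈ U, ρ (D x y) u ∈ U))
              → U = ⊥ ∨ U = ⊤)) := by
  have key := isLieTripleIdeal_iff_invariant (ρ := ρ.toLinearMap) hfaithful hBsymm hBnondeg
    hipsymm (fun v hv => by_contra fun h => (hippos v h).ne' hv) hipinv hD hcyc
  exact ⟨key, forall_congr' fun U => imp_congr_left (key U).symm⟩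

/-- A subspace U ⊆ V is an ideal of the Lie triple system iff it is a 𝔤-submodule; consequently V is irreducible as a 𝔤-module iff the Lie triple system V has no ideals other than 0 and V.  (Equivalence (1) ⟺ (2) of Theorem 3.1.) -/
theorem lts_ideal_iff_submodule
    {g V : Type*} [LieRing g] [LieAlgebra ℝ g]
    [AddCommGroup V] [Module ℝ V]
    [FiniteDimensional ℝ g] [FiniteDimensional ℝ V]
    -- the ad-invariant nondegenerate symmetric bilinear form on 𝔤
    (B : g →ₗ[ℝ] g →ₗ[ℝ] ℝ)
    (hBsymm : ∀ X Y : g, B X Y = B Y X)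
    (hBnondeg : ∀ X : g, (∀ Y : g, B X Y = 0) → X = 0)
    (hBinv : ∀ X Y Z : g, B ⁅X, Y⁆ Z + B Y ⁅X, Z⁆ = 0)
    -- the faithful representation of 𝔤 on V
    (ρ : g →ₗ⁅ℝ⁆ Module.End ℝ V)
    (hfaithful : Function.Injective ρ)
    -- the 𝔤-invariant positive-definite symmetric bilinear form on V
    (ip : V →ₗ[ℝ] V →ₗ[ℝ] ℝ)
    (hipsymm : ∀ v w : V, ip v w = ip w v)
    (hippos : ∀ v : V, v ≠ 0 → 0 < ip v v)
    (hipinv : ∀ (X : g) (v w : V), ip (ρ X v) w + ip v (ρ X w) = 0)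
    -- the Faulkner map D, defined by transposing the 𝔤-action
    (D : V →ₗ[ℝ] V →ₗ[ℝ] g)
    (hD : ∀ (v w : V) (X : g), B (D v w) X = ip (ρ X v) w)
    -- cyclicity: [x,y,z] + [y,z,x] + [z,x,y] = 0 (Lie triple system condition)
    (hcyc : ∀ x y z : V, ρ (D x y) z + ρ (D y z) x + ρ (D z x) y = 0) :
    (∀ U : Submodule ℝ V,
        ((∀ u ∈ U, ∀ x y : V, ρ (D u x) y ∈ U) ∧ (∀ x y : V, ∀ u ∈ U, ρ (D x y) u ∈ U))
          ↔ (∀ (X : g), ∀ u ∈ U, ρ X u ∈ U)) ∧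
      ((∀ U : Submodule ℝ V, (∀ (X : g), ∀ u ∈ U, ρ X u ∈ U) → U = ⊥ ∨ U = ⊤)
        ↔ (∀ U : Submodule ℝ V,
            ((∀ u ∈ U, ∀ x y : V, ρ (D u x) y ∈ U) ∧ (∀ x y : V, ∀ u ∈ U, ρ (D x y) u ∈ U))
              → U = ⊥ ∨ U = ⊤)) :=
  lts_ideal_iff_submodule_general B hBsymm hBnondeg ρ hfaithful ip hipsymm hippos hipinv D hD hcyc
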